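/- arXiv:2108.06902 — 4 statements merged into one kernel-verified Lean document; each statement's English description precedes it below -/
import Mathlib

section
/- Let 𝔻∖{0} = {ζ ∈ ℂ : 0 < |ζ| < 1} be the punctured unit disk. Then for every z ∈ 𝔻∖{0}, the squeezing function corresponding to the polydisk satisfies T_{𝔻∖{0}}(z) = |z|. -/
/-- The squeezing function corresponding to the polydisk (here `n = 1`, so the disk)
for a domain `Ω ⊆ ℂ`:
`T_Ω(z) = sup { r > 0 | ∃ holomorphic embedding f : Ω → 𝔻 with f z = 0 and 𝔻(0,r) ⊆ f(Ω) }`. -/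
noncomputable def diskSqueezingFunction (Ω : Set ℂ) (z : ℂ) : ℝ :=
  sSup {r : ℝ | 0 < r ∧ ∃ f : ℂ → ℂ,
    DifferentiableOn ℂ f Ω ∧ Set.InjOn f Ω ∧
    (∀ w ∈ Ω, ‖f w‖ < 1) ∧
    f z = 0 ∧
    {w : ℂ | ‖w‖ < r} ⊆ f '' Ω}

open Complex Metric Set Filter Topology

noncomputable def mob (z a : ℂ) : ℂ := (a - z) / (1 - (starRingEnd ℂ) z * a)

lemma mob_denom_ne {z a : ℂ} (h : ‖z‖ * ‖a‖ < 1) :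
    1 - (starRingEnd ℂ) z * a ≠ 0 := by
  intro hc
  have h1 : (starRingEnd ℂ) z * a = 1 := by linear_combination -hc
  have := congrArg (‖·‖) h1
  simp [map_mul] at this
  rw [this] at h
  exact lt_irrefl 1 h

lemma mob_normSq_identity (z a : ℂ) :
    Complex.normSq (1 - (starRingEnd ℂ) z * a) - Complex.normSq (a - z)
      = (1 - Complex.normSq z) * (1 - Complex.normSq a) := by
  simp [Complex.normSq_apply, Complex.sub_re, Complex.sub_im, Complex.mul_re, Complex.mul_im]
  ring

lemma mob_abs_lt {z a : ℂ} (hz : ‖z‖ < 1) (ha : ‖a‖ < 1) :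
    ‖mob z a‖ < 1 := by
  have hd : 1 - (starRingEnd ℂ) z * a ≠ 0 :=
    mob_denom_ne (by nlinarith [norm_nonneg z, norm_nonneg a])
  have hz2 : Complex.normSq z < 1 := by rw [Complex.normSq_eq_norm_sq]; nlinarith [norm_nonneg z]
  have ha2 : Complex.normSq a < 1 := by rw [Complex.normSq_eq_norm_sq]; nlinarith [norm_nonneg a]
  rw [mob, norm_div, div_lt_one (norm_pos_iff.mpr hd)]
  rw [Complex.norm_def, Complex.norm_def]
  apply Real.sqrt_lt_sqrt (Complex.normSq_nonneg _)
  nlinarith [mob_normSq_identity z a]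

lemma mob_mob {z a : ℂ} (hz : ‖z‖ < 1) (ha : ‖a‖ < 1) :
    mob (-z) (mob z a) = a := by
  have hd : 1 - (starRingEnd ℂ) z * a ≠ 0 :=
    mob_denom_ne (by nlinarith [norm_nonneg z, norm_nonneg a])
  have hns : (1 : ℂ) - (starRingEnd ℂ) z * z ≠ 0 := by
    intro hc
    have h1 : (starRingEnd ℂ) z * z = 1 := by linear_combination -hc
    have := congrArg (‖·‖) h1
    simp [map_mul] at this
    nlinarith [norm_nonneg z]
  rw [mob, mob, map_neg, sub_neg_eq_add]
  rw [div_add' _ _ _ hd, neg_mul, sub_neg_eq_add]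
  have hden : 1 + (starRingEnd ℂ) z * ((a - z) / (1 - (starRingEnd ℂ) z * a))
      = (1 - (starRingEnd ℂ) z * z) / (1 - (starRingEnd ℂ) z * a) := by
    field_simp
    ring
  rw [hden, div_div_div_comm, div_self hd, div_one, div_eq_iff hns]
  ring

lemma mob_self (z : ℂ) : mob z z = 0 := by simp [mob]

lemma mob_zero (z : ℂ) : mob (-z) 0 = z := by simp [mob]

lemma mob_diffOn {z : ℂ} {s : Set ℂ} (h : ∀ a ∈ s, ‖z‖ * ‖a‖ < 1) :
    DifferentiableOn ℂ (mob z) s := by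
  apply DifferentiableOn.div
  · exact (differentiable_id.sub_const z).differentiableOn
  · exact (differentiable_const (1:ℂ)).differentiableOn.sub
      ((differentiable_id.const_mul _).differentiableOn)
  · exact fun a ha => mob_denom_ne (h a ha)

/-- Two distinct nonzero points in any ball. -/
lemma two_points (c : ℂ) {η : ℝ} (hη : 0 < η) :
    ∃ a b : ℂ, a ≠ b ∧ a ∈ ball c η ∧ b ∈ ball c η ∧ a ≠ 0 ∧ b ≠ 0 := by
  have hmem : ∀ t : ℝ, |t| < η → c + t ∈ ball c η := by
    intro t ht
    simp only [mem_ball, dist_eq_norm, add_sub_cancel_left]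
    rwa [Complex.norm_real]
  have key : ∀ s t : ℝ, s ≠ t → c + (s:ℂ) ≠ c + (t:ℂ) := by
    intro s t hst h
    exact hst (by exact_mod_cast add_left_cancel h)
  have key0 : ∀ s t : ℝ, s ≠ t → c + (s:ℂ) = 0 → c + (t:ℂ) ≠ 0 := by
    intro s t hst hs ht
    exact key s t hst (hs.trans ht.symm)
  have h1 : c + ((η/2 : ℝ):ℂ) ∈ ball c η := hmem _ (by rw [abs_of_pos (by linarith)]; linarith)
  have h2 : c + ((η/4 : ℝ):ℂ) ∈ ball c η := hmem _ (by rw [abs_of_pos (by linarith)]; linarith)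
  have h3 : c + ((-(η/4) : ℝ):ℂ) ∈ ball c η := hmem _ (by rw [abs_of_neg (by linarith)]; linarith)
  by_cases hz1 : c + ((η/2 : ℝ):ℂ) = 0
  · exact ⟨_, _, key (η/4) (-(η/4)) (ne_of_gt (by linarith)), h2, h3,
      key0 (η/2) (η/4) (ne_of_gt (by linarith)) hz1,
      key0 (η/2) (-(η/4)) (ne_of_gt (by linarith)) hz1⟩
  · by_cases hz2 : c + ((η/4 : ℝ):ℂ) = 0
    · exact ⟨_, _, key (η/2) (-(η/4)) (ne_of_gt (by linarith)), h1, h3, hz1,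
        key0 (η/4) (-(η/4)) (ne_of_gt (by linarith)) hz2⟩
    · exact ⟨_, _, key (η/2) (η/4) (ne_of_gt (by linarith)), h1, h2, hz1, hz2⟩

theorem diskSqueezing_main
    (Ω : Set ℂ) (hΩ : Ω = {ζ : ℂ | 0 < ‖ζ‖ ∧ ‖ζ‖ < 1})
    (z : ℂ) (hz : z ∈ Ω) :
    sSup {r : ℝ | 0 < r ∧ ∃ f : ℂ → ℂ,
    DifferentiableOn ℂ f Ω ∧ Set.InjOn f Ω ∧
    (∀ w ∈ Ω, ‖f w‖ < 1) ∧
    f z = 0 ∧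
    {w : ℂ | ‖w‖ < r} ⊆ f '' Ω} = ‖z‖ := by
  have hz1 : 0 < ‖z‖ := (hΩ ▸ hz).1
  have hz2 : ‖z‖ < 1 := (hΩ ▸ hz).2
  have hzne : z ≠ 0 := norm_ne_zero_iff.mp hz1.ne'
  set S := {r : ℝ | 0 < r ∧ ∃ f : ℂ → ℂ,
    DifferentiableOn ℂ f Ω ∧ Set.InjOn f Ω ∧
    (∀ w ∈ Ω, ‖f w‖ < 1) ∧
    f z = 0 ∧
    {w : ℂ | ‖w‖ < r} ⊆ f '' Ω} with hS
  -- membership: |z| ∈ S via the Möbius map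
  have hmem : ‖z‖ ∈ S := by
    refine ⟨hz1, mob z, ?_, ?_, ?_, mob_self z, ?_⟩
    · apply mob_diffOn
      intro a ha
      have := (hΩ ▸ ha).2
      nlinarith [norm_nonneg a, norm_nonneg z]
    · intro a ha b hb hab
      have ha1 := (hΩ ▸ ha).2
      have hb1 := (hΩ ▸ hb).2
      calc a = mob (-z) (mob z a) := (mob_mob hz2 ha1).symm
        _ = mob (-z) (mob z b) := by rw [hab]
        _ = b := mob_mob hz2 hb1
    · intro a ha
      exact mob_abs_lt hz2 (hΩ ▸ ha).2
    · intro w hw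
      have hw1 : ‖w‖ < ‖z‖ := hw
      have hw2 : ‖w‖ < 1 := hw1.trans hz2
      have hmz : ‖-z‖ < 1 := by rwa [norm_neg]
      set ζ := mob (-z) w with hζ
      have hζ1 : ‖ζ‖ < 1 := mob_abs_lt hmz hw2
      have heq : mob z ζ = w := by
        have := mob_mob hmz hw2
        rwa [neg_neg] at this
      have hζ0 : ζ ≠ 0 := by
        intro h
        rw [h, mob] at heq
        simp at heq
        rw [← heq] at hw1
        rw [norm_neg] at hw1
        exact lt_irrefl _ hw1
      exact ⟨ζ, hΩ ▸ ⟨norm_pos_iff.mpr hζ0, hζ1⟩, heq⟩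
  -- upper bound
  have hub : ∀ r ∈ S, r ≤ ‖z‖ := by
    rintro r ⟨hr, f, hdf, hinj, hlt, hfz, hsub⟩
    by_contra hcon
    push_neg at hcon
    have hΩ' : Ω = ball (0:ℂ) 1 \ {0} := by
      rw [hΩ]; ext ζ
      simp only [mem_setOf_eq, mem_diff, mem_ball_zero_iff,
        mem_singleton_iff]
      constructor
      · rintro ⟨a1, a2⟩; exact ⟨a2, norm_ne_zero_iff.mp a1.ne'⟩
      · rintro ⟨a1, a2⟩; exact ⟨norm_pos_iff.mpr a2, a1⟩
    set F := Function.update f 0 (limUnder (𝓝[≠] (0:ℂ)) f) with hFdef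
    have hF : DifferentiableOn ℂ F (ball (0:ℂ) 1) := by
      apply Complex.differentiableOn_update_limUnder_of_bddAbove (ball_mem_nhds _ one_pos)
      · rw [← hΩ']; exact hdf
      · refine ⟨1, ?_⟩
        rintro y ⟨a, ha, rfl⟩
        rw [← hΩ'] at ha
        simpa using (hlt a ha).le
    have hFf : ∀ a ∈ Ω, F a = f a := by
      intro a ha
      have : a ≠ 0 := norm_ne_zero_iff.mp (hΩ ▸ ha).1.ne'
      exact Function.update_of_ne this _ _
    have hFan : ∀ c ∈ ball (0:ℂ) 1, AnalyticAt ℂ F c := fun c hc =>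
      hF.analyticAt (isOpen_ball.mem_nhds hc)
    -- F is not eventually constant at any point of the disk
    have hnc : ∀ c ∈ ball (0:ℂ) 1, ¬ (∀ᶠ ζ in 𝓝 c, F ζ = F c) := by
      intro c hc hev
      obtain ⟨η, hηpos, hball⟩ := Metric.eventually_nhds_iff.mp hev
      have hc1 : dist c 0 < 1 := mem_ball.mp hc
      set η₂ := min η (1 - dist c 0) with hη₂
      have hη₂pos : 0 < η₂ := lt_min hηpos (by linarith)
      obtain ⟨a, b, hab, haB, hbB, ha0, hb0⟩ := two_points c hη₂pos
      have hmemΩ : ∀ x : ℂ, x ∈ ball c η₂ → x ≠ 0 → x ∈ Ω := by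
        intro x hx hx0
        rw [hΩ']
        refine ⟨mem_ball.mpr ?_, hx0⟩
        calc dist x 0 ≤ dist x c + dist c 0 := dist_triangle _ _ _
          _ < η₂ + dist c 0 := by linarith [mem_ball.mp hx]
          _ ≤ 1 := by rw [hη₂]; have := min_le_right η (1 - dist c 0); linarith
      have haΩ := hmemΩ a haB ha0
      have hbΩ := hmemΩ b hbB hb0
      have hFa : F a = F c := hball (lt_of_lt_of_le (mem_ball.mp haB) (min_le_left _ _))
      have hFb : F b = F c := hball (lt_of_lt_of_le (mem_ball.mp hbB) (min_le_left _ _))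
      exact hab (hinj haΩ hbΩ (by rw [← hFf a haΩ, ← hFf b hbΩ, hFa, hFb]))
    set w₀ := F 0 with hw₀def
    have h0B : (0:ℂ) ∈ ball (0:ℂ) 1 := mem_ball_self one_pos
    -- |w₀| ≤ 1
    have hcont0 : ContinuousAt F 0 := (hFan 0 h0B).continuousAt
    have hw₀le : ‖w₀‖ ≤ 1 := by
      have htend : Tendsto (fun ζ => ‖F ζ‖) (𝓝[≠] (0:ℂ))
          (𝓝 (‖w₀‖)) :=
        (continuous_norm.continuousAt.comp hcont0).tendsto.mono_left nhdsWithin_le_nhds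
      refine le_of_tendsto htend ?_
      filter_upwards [mem_nhdsWithin_of_mem_nhds (ball_mem_nhds (0:ℂ) one_pos),
        self_mem_nhdsWithin] with ζ hζB hζ0
      have hζΩ : ζ ∈ Ω := by rw [hΩ']; exact ⟨hζB, hζ0⟩
      rw [hFf ζ hζΩ]
      exact (hlt ζ hζΩ).le
    -- |w₀| < 1 (open mapping / maximum principle)
    have hw₀lt : ‖w₀‖ < 1 := by
      rcases lt_or_eq_of_le hw₀le with h | habs1
      · exact h
      exfalso
      have hw₀ne : w₀ ≠ 0 := by
        intro h; rw [h] at habs1; simp at habs1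
      have H := (hFan 0 h0B).eventually_constant_or_nhds_le_map_nhds_aux.resolve_left
        (hnc 0 h0B)
      have himg : F '' ball (0:ℂ) 1 ∈ 𝓝 w₀ := H (image_mem_map (ball_mem_nhds _ one_pos))
      obtain ⟨ε, hε, hballsub⟩ := Metric.mem_nhds_iff.mp himg
      set w₁ := w₀ + (ε/2 : ℝ) * w₀ with hw₁def
      have hw₁mem : w₁ ∈ ball w₀ ε := by
        rw [mem_ball, dist_eq_norm, hw₁def, add_sub_cancel_left]
        rw [norm_mul, Complex.norm_real, habs1, mul_one,
          Real.norm_eq_abs, abs_of_pos (half_pos hε)]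
        linarith
      have hw₁abs : 1 < ‖w₁‖ := by
        have : w₁ = (1 + (ε/2:ℝ)) * w₀ := by push_cast [hw₁def]; ring
        rw [this, norm_mul, ← habs1]
        have : ‖(1:ℂ) + (ε/2:ℝ)‖ = 1 + ε/2 := by
          rw [show ((1:ℂ) + (ε/2:ℝ)) = (((1 + ε/2 : ℝ)):ℂ) by push_cast; ring]
          rw [Complex.norm_real, Real.norm_eq_abs, abs_of_pos (by linarith)]
        rw [this, ← habs1]
        nlinarith
      obtain ⟨ζ₁, hζ₁B, hζ₁⟩ := hballsub hw₁mem
      by_cases hζ₁0 : ζ₁ = 0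
      · rw [hζ₁0] at hζ₁
        rw [← hw₀def] at hζ₁
        rw [← hζ₁] at hw₁abs
        rw [← habs1] at hw₁abs
        exact lt_irrefl _ hw₁abs
      · have hζ₁Ω : ζ₁ ∈ Ω := by rw [hΩ']; exact ⟨hζ₁B, hζ₁0⟩
        have : ‖F ζ₁‖ < 1 := by rw [hFf ζ₁ hζ₁Ω]; exact hlt ζ₁ hζ₁Ω
        rw [hζ₁] at this
        linarith
    -- Schwarz: |w₀| ≤ |z|
    have hmz : ‖-z‖ < 1 := by rwa [norm_neg]
    have hw₀z : ‖w₀‖ ≤ ‖z‖ := by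
      set g := fun ζ => F (mob (-z) ζ) with hgdef
      have hmobmaps : MapsTo (mob (-z)) (ball (0:ℂ) 1) (ball (0:ℂ) 1) := by
        intro ζ hζ
        rw [mem_ball_zero_iff] at *
        exact mob_abs_lt hmz hζ
      have hgd : DifferentiableOn ℂ g (ball (0:ℂ) 1) := by
        apply hF.comp _ hmobmaps
        apply mob_diffOn
        intro a ha
        rw [mem_ball_zero_iff] at ha
        rw [norm_neg]
        nlinarith [norm_nonneg z, norm_nonneg a]
      have hg0 : g 0 = 0 := by
        show F (mob (-z) 0) = 0
        rw [mob_zero, hFf z hz, hfz]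
      have hgmaps : MapsTo g (ball (0:ℂ) 1) (ball (g 0) 1) := by
        intro ζ hζ
        rw [hg0, mem_ball_zero_iff]
        have haB : mob (-z) ζ ∈ ball (0:ℂ) 1 := hmobmaps hζ
        by_cases h0 : mob (-z) ζ = 0
        · show ‖F (mob (-z) ζ)‖ < 1
          rw [h0]; exact hw₀lt
        · have hΩm : mob (-z) ζ ∈ Ω := by rw [hΩ']; exact ⟨haB, h0⟩
          show ‖F (mob (-z) ζ)‖ < 1
          rw [hFf _ hΩm]; exact hlt _ hΩm
      have hzball : -z ∈ ball (0:ℂ) 1 := by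
        rw [mem_ball_zero_iff]; exact hmz
      have hSch := Complex.dist_le_div_mul_dist_of_mapsTo_ball hgd (hgmaps.mono_right ball_subset_closedBall) hzball
      have hgz : g (-z) = w₀ := by
        show F (mob (-z) (-z)) = w₀
        rw [mob_self]
      rw [hgz, hg0, one_div_one, one_mul] at hSch
      rw [Complex.dist_eq, Complex.dist_eq, sub_zero, sub_zero, norm_neg] at hSch
      exact hSch
    -- final contradiction
    have hw₀r : w₀ ∈ {w : ℂ | ‖w‖ < r} := lt_of_le_of_lt hw₀z hcon
    obtain ⟨ζ₀, hζ₀Ω, hfζ₀⟩ := hsub hw₀r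
    have hζ₀0 : ζ₀ ≠ 0 := norm_ne_zero_iff.mp (hΩ ▸ hζ₀Ω).1.ne'
    have hζ₀B : ζ₀ ∈ ball (0:ℂ) 1 := (hΩ' ▸ hζ₀Ω).1
    have hζ₀pos : 0 < ‖ζ₀‖ := (hΩ ▸ hζ₀Ω).1
    have hζ₀lt : ‖ζ₀‖ < 1 := (hΩ ▸ hζ₀Ω).2
    have hFζ₀ : F ζ₀ = w₀ := (hFf ζ₀ hζ₀Ω).trans hfζ₀
    have H := (hFan ζ₀ hζ₀B).eventually_constant_or_nhds_le_map_nhds_aux.resolve_left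
      (hnc ζ₀ hζ₀B)
    rw [hFζ₀] at H
    set δ := min (‖ζ₀‖ / 2) (1 - ‖ζ₀‖) with hδdef
    have hδpos : 0 < δ := lt_min (by linarith) (by linarith)
    have hVsub : ∀ b ∈ ball ζ₀ δ, ‖ζ₀‖ / 2 < ‖b‖ ∧ b ∈ Ω := by
      intro b hb
      have hd : ‖b - ζ₀‖ < δ := by
        rw [← Complex.dist_eq]; exact mem_ball.mp hb
      have htri : |‖b‖ - ‖ζ₀‖| ≤ ‖b - ζ₀‖ :=
        abs_norm_sub_norm_le b ζ₀
      rw [abs_le] at htri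
      have h1 : δ ≤ ‖ζ₀‖ / 2 := min_le_left _ _
      have h2 : δ ≤ 1 - ‖ζ₀‖ := min_le_right _ _
      constructor
      · linarith [htri.1]
      · rw [hΩ]
        constructor
        · linarith [htri.1]
        · linarith [htri.2]
    have hFV : F '' ball ζ₀ δ ∈ 𝓝 w₀ := H (image_mem_map (ball_mem_nhds _ hδpos))
    have hT : F ⁻¹' (F '' ball ζ₀ δ) ∈ 𝓝 (0:ℂ) := by
      apply hcont0.preimage_mem_nhds
      rw [← hw₀def] at *
      exact hFV
    obtain ⟨η, hηpos, hηsub⟩ := Metric.mem_nhds_iff.mp hT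
    set m := min η (‖ζ₀‖ / 2) with hmdef
    have hmpos : 0 < m := lt_min hηpos (by linarith)
    set a : ℂ := ((m / 2 : ℝ) : ℂ) with hadef
    have haabs : ‖a‖ = m / 2 := by
      rw [hadef, Complex.norm_real, Real.norm_eq_abs, abs_of_pos (by linarith)]
    have ha0 : a ≠ 0 := by
      rw [hadef]
      exact_mod_cast (by linarith : (m/2 : ℝ) ≠ 0)
    have haball : a ∈ ball (0:ℂ) η := by
      rw [mem_ball_zero_iff, haabs]
      have := min_le_left η (‖ζ₀‖ / 2)
      linarith
    obtain ⟨b, hbV, hFba⟩ := hηsub haball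
    have haΩ : a ∈ Ω := by
      rw [hΩ]
      refine ⟨by rw [haabs]; linarith, ?_⟩
      rw [haabs]
      have := min_le_right η (‖ζ₀‖ / 2)
      linarith
    obtain ⟨hbgt, hbΩ⟩ := hVsub b hbV
    have hfeq : f b = f a := by
      rw [← hFf b hbΩ, ← hFf a haΩ, hFba]
    have hba : b = a := hinj hbΩ haΩ hfeq
    rw [hba] at hbgt
    rw [haabs] at hbgt
    have := min_le_right η (‖ζ₀‖ / 2)
    linarith
  exact le_antisymm (csSup_le ⟨_, hmem⟩ hub) (le_csSup ⟨_, hub⟩ hmem)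

/-- For the punctured unit disk `𝔻 ∖ {0}`, the squeezing function corresponding to the
polydisk is `T(z) = |z|`. -/
theorem diskSqueezing_of_punctured_disk
    (Ω : Set ℂ) (hΩ : Ω = {ζ : ℂ | 0 < ‖ζ‖ ∧ ‖ζ‖ < 1})
    (z : ℂ) (hz : z ∈ Ω) :
    diskSqueezingFunction Ω z = ‖z‖ := by
  rw [diskSqueezingFunction]
  exact diskSqueezing_main Ω hΩ z hz
end

section
/- Let Ω ⊆ ℂ be an open connected set, and let p ∈ ℂ with p ∉ Ω be an isolated boundary point of Ω, i.e., there exists δ > 0 such that {ζ ∈ ℂ : 0 < |ζ − p| < δ} ⊆ Ω. Let f : Ω → 𝔻 be an injective holomorphic map into the open unit disk, and let f̃ : Ω ∪ {p} → ℂ be the holomorphic extension of f across the removable singularity at p (which exists since f is bounded). Then f̃(p) ∉ f(Ω). -/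
/-- If `Ω ⊆ ℂ` is a domain with an isolated boundary point `p`, `f : Ω → 𝔻` is an
injective holomorphic map, and `f̃` is the holomorphic extension of `f` across the
removable singularity at `p`, then `f̃(p) ∉ f(Ω)`. -/
theorem extension_value_not_mem_image
    (Ω : Set ℂ) (hopen : IsOpen Ω) (hconn : IsConnected Ω)
    (p : ℂ) (hp : p ∉ Ω)
    (δ : ℝ) (hδ : 0 < δ)
    (hpball : {ζ : ℂ | 0 < ‖ζ - p‖ ∧ ‖ζ - p‖ < δ} ⊆ Ω)
    (f : ℂ → ℂ) (hf : DifferentiableOn ℂ f Ω) (hinj : Set.InjOn f Ω)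
    (hmaps : ∀ w ∈ Ω, ‖f w‖ < 1)
    (ftilde : ℂ → ℂ) (hft : DifferentiableOn ℂ ftilde (Ω ∪ {p}))
    (hagree : ∀ ζ ∈ Ω, ftilde ζ = f ζ) :
    ftilde p ∉ f '' Ω := by
  -- Setup: U = Ω ∪ {p} is open and preconnected
  set U : Set ℂ := Ω ∪ {p} with hU
  have hball_sub : ∀ z ∈ Metric.ball p δ, z ∈ U := by
    intro z hz
    rcases eq_or_ne z p with rfl | hzp
    · exact Or.inr rfl
    · refine Or.inl (hpball ?_)
      constructor
      · simpa [norm_pos_iff, sub_eq_zero] using hzp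
      · simpa [Complex.dist_eq] using hz
  have hUopen : IsOpen U := by
    have : U = Ω ∪ Metric.ball p δ := by
      apply Set.Subset.antisymm
      · rintro z (hz | hz)
        · exact Or.inl hz
        · exact Or.inr (by simp [Set.mem_singleton_iff.mp hz, hδ])
      · rintro z (hz | hz)
        · exact Or.inl hz
        · exact hball_sub z hz
    rw [this]
    exact hopen.union Metric.isOpen_ball
  have hpU : p ∈ U := Or.inr rfl
  have hΩU : Ω ⊆ U := Set.subset_union_left
  have hUconn : IsPreconnected U := by
    have h1 : Ω ⊆ U := hΩU
    have h2 : U ⊆ closure Ω := by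
      rintro z (hz | hz)
      · exact subset_closure hz
      · rw [Set.mem_singleton_iff.mp hz]
        -- p is a limit of points in the punctured ball
        rw [Metric.mem_closure_iff]
        intro ε hε
        set m : ℝ := min ε δ / 2 with hmdef
        have hm : (0:ℝ) < m := by positivity
        have habs : ‖p + Complex.I * (m:ℝ) - p‖ = m := by
          rw [add_sub_cancel_left, norm_mul, Complex.norm_I, Complex.norm_real, Real.norm_eq_abs,
            one_mul, abs_of_pos hm]
        refine ⟨p + Complex.I * (m:ℝ), hpball ?_, ?_⟩
        · constructor
          · rw [habs]; exact hm
          · rw [habs]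
            calc m ≤ δ / 2 := by rw [hmdef]; gcongr; exact min_le_right _ _
              _ < δ := by linarith
        · have : dist p (p + Complex.I * (m:ℝ)) = m := by
            rw [dist_comm, Complex.dist_eq, habs]
          rw [this]
          calc m ≤ ε / 2 := by rw [hmdef]; gcongr; exact min_le_left _ _
            _ < ε := by linarith
    exact hconn.isPreconnected.subset_closure h1 h2
  have hana : AnalyticOnNhd ℂ ftilde U := hft.analyticOnNhd hUopen
  -- ftilde is not constant on U
  have hnonconst : ¬ ∃ c, ∀ z ∈ U, ftilde z = c := by
    rintro ⟨c, hc⟩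
    have key : ∀ t : ℝ, 0 < t → t < δ → p + (t:ℂ) ∈ Ω := by
      intro t ht htδ
      refine hpball ⟨?_, ?_⟩ <;>
        rw [add_sub_cancel_left, Complex.norm_real, Real.norm_eq_abs, abs_of_pos ht] <;>
        linarith
    have hz1 : p + ((δ/2 : ℝ):ℂ) ∈ Ω := key _ (by linarith) (by linarith)
    have hz2 : p + ((δ/4 : ℝ):ℂ) ∈ Ω := key _ (by linarith) (by linarith)
    have hne : p + (δ/2 : ℝ) ≠ p + (δ/4 : ℝ) := by
      simp only [ne_eq, add_right_inj]
      intro h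
      have : (δ/2 : ℝ) = δ/4 := by exact_mod_cast h
      linarith
    apply hne
    apply hinj hz1 hz2
    rw [← hagree _ hz1, ← hagree _ hz2, hc _ (hΩU hz1), hc _ (hΩU hz2)]
  have hopenmap : ∀ s ⊆ U, IsOpen s → IsOpen (ftilde '' s) :=
    (hana.is_constant_or_isOpen hUconn).resolve_left hnonconst
  -- main argument
  rintro ⟨w, hw, hfw⟩
  have hwp : w ≠ p := fun h => hp (h ▸ hw)
  obtain ⟨r', hr'pos, hr'sub⟩ := Metric.isOpen_iff.mp hopen w hw
  set r : ℝ := min δ (min r' (dist w p / 2)) with hrdef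
  have hdwp : 0 < dist w p := dist_pos.mpr hwp
  have hrpos : 0 < r := lt_min hδ (lt_min hr'pos (by positivity))
  have hrδ : r ≤ δ := min_le_left _ _
  have hrr' : r ≤ r' := le_trans (min_le_right _ _) (min_le_left _ _)
  have hrd : r ≤ dist w p / 2 := le_trans (min_le_right _ _) (min_le_right _ _)
  have hbp : Metric.ball p r ⊆ U := fun z hz =>
    hball_sub z (Metric.ball_subset_ball hrδ hz)
  have hbw : Metric.ball w r ⊆ Ω := fun z hz => hr'sub (Metric.ball_subset_ball hrr' hz)
  have hdisj : Disjoint (Metric.ball p r) (Metric.ball w r) := by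
    rw [Set.disjoint_left]
    intro z hz1 hz2
    have h1 : dist z p < dist w p / 2 := lt_of_lt_of_le (Metric.mem_ball.mp hz1) hrd
    have h2 : dist z w < dist w p / 2 := lt_of_lt_of_le (Metric.mem_ball.mp hz2) hrd
    have := dist_triangle w z p
    rw [dist_comm z w] at h2
    linarith
  have hO1 : IsOpen (ftilde '' Metric.ball p r) := hopenmap _ hbp Metric.isOpen_ball
  have hO2 : IsOpen (ftilde '' Metric.ball w r) :=
    hopenmap _ (fun z hz => hΩU (hbw hz)) Metric.isOpen_ball
  set c : ℂ := ftilde p with hc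
  have hcO1 : c ∈ ftilde '' Metric.ball p r :=
    ⟨p, Metric.mem_ball_self hrpos, rfl⟩
  have hcO2 : c ∈ ftilde '' Metric.ball w r :=
    ⟨w, Metric.mem_ball_self hrpos, by rw [hagree w hw, hfw]⟩
  obtain ⟨ε, hεpos, hεsub⟩ := Metric.isOpen_iff.mp (hO1.inter hO2) c ⟨hcO1, hcO2⟩
  have hv : c + (ε/2 : ℝ) ∈ ftilde '' Metric.ball p r ∩ ftilde '' Metric.ball w r := by
    apply hεsub
    rw [Metric.mem_ball, Complex.dist_eq, add_sub_cancel_left, Complex.norm_real, Real.norm_eq_abs,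
      abs_of_pos (by linarith : (0:ℝ) < ε/2)]
    linarith
  obtain ⟨⟨z1, hz1b, hz1v⟩, ⟨z2, hz2b, hz2v⟩⟩ := hv
  have hz1p : z1 ≠ p := by
    rintro rfl
    rw [← hc] at hz1v
    have h0 : ((ε/2 : ℝ) : ℂ) = 0 := (left_eq_add.mp hz1v)
    rw [Complex.ofReal_eq_zero] at h0
    linarith
  have hz1Ω : z1 ∈ Ω := by
    refine hpball ⟨?_, ?_⟩
    · simpa [norm_pos_iff, sub_eq_zero] using hz1p
    · have := Metric.mem_ball.mp hz1b
      rw [Complex.dist_eq] at this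
      linarith [lt_of_lt_of_le this hrδ]
  have hz2Ω : z2 ∈ Ω := hbw hz2b
  have hne : z1 ≠ z2 := fun h => (Set.disjoint_left.mp hdisj hz1b) (h ▸ hz2b)
  apply hne
  apply hinj hz1Ω hz2Ω
  rw [← hagree _ hz1Ω, ← hagree _ hz2Ω, hz1v, hz2v]
end

section
/- Let Ω ⊆ ℂ be an open connected set, and let p ∈ ℂ with p ∉ Ω be an isolated boundary point of Ω, i.e., there exists δ > 0 such that {ζ ∈ ℂ : 0 < |ζ − p| < δ} ⊆ Ω. Let f : Ω → 𝔻 be an injective holomorphic map into the open unit disk with f(z) = 0 for some z ∈ Ω, let f̃ : Ω ∪ {p} → ℂ be the holomorphic extension of f across the removable singularity at p, and suppose c > 0 satisfies {w ∈ ℂ : |w| < c} ⊆ f(Ω). Then c ≤ |f̃(p)|. -/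
open Filter Metric Set Topology

/-- If `Ω ⊆ ℂ` is a domain with an isolated boundary point `p`, `f : Ω → 𝔻` is an
injective holomorphic map with `f z = 0`, `f̃` is the holomorphic extension of `f`
across the removable singularity at `p`, and the disk of radius `c` about `0` is
contained in `f(Ω)`, then `c ≤ |f̃(p)|`. -/
theorem le_abs_extension_value_of_disk_subset_image
    (Ω : Set ℂ) (hopen : IsOpen Ω) (hconn : IsConnected Ω)
    (p : ℂ) (hp : p ∉ Ω)
    (δ : ℝ) (hδ : 0 < δ)
    (hpball : {ζ : ℂ | 0 < ‖ζ - p‖ ∧ ‖ζ - p‖ < δ} ⊆ Ω)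
    (f : ℂ → ℂ) (hf : DifferentiableOn ℂ f Ω) (hinj : Set.InjOn f Ω)
    (hmaps : ∀ w ∈ Ω, ‖f w‖ < 1)
    (z : ℂ) (hz : z ∈ Ω) (hfz : f z = 0)
    (ftilde : ℂ → ℂ) (hft : DifferentiableOn ℂ ftilde (Ω ∪ {p}))
    (hagree : ∀ ζ ∈ Ω, ftilde ζ = f ζ)
    (c : ℝ) (hc : 0 < c)
    (hsub : {w : ℂ | ‖w‖ < c} ⊆ f '' Ω) :
    c ≤ ‖ftilde p‖ := by
  by_contra hlt
  push_neg at hlt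
  -- Ω ∪ {p} is open
  have hO : IsOpen (Ω ∪ {p}) := by
    rw [isOpen_iff_mem_nhds]
    rintro x (hx | hx)
    · exact mem_of_superset (hopen.mem_nhds hx) (subset_union_left)
    · rw [mem_singleton_iff] at hx
      subst hx
      refine mem_of_superset (Metric.ball_mem_nhds x hδ) ?_
      intro ζ hζ
      rcases eq_or_ne ζ x with rfl | hne
      · exact Or.inr rfl
      · refine Or.inl (hpball ⟨?_, ?_⟩)
        · simpa [norm_pos_iff, sub_eq_zero] using hne
        · simpa [Complex.dist_eq] using hζ
  have hpO : p ∈ Ω ∪ {p} := Or.inr rfl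
  -- f̃ p is in the image of f
  obtain ⟨q, hq, hfq⟩ := hsub hlt
  have hpq : p ≠ q := fun h => hp (h ▸ hq)
  -- helper: two distinct points of Ω in any ball around a point of Ω ∪ {p}
  have hdist : ∀ (x : ℂ) (s : ℝ), 0 < s → dist (x + (s:ℂ)) x = s ∧ dist (x - (s:ℂ)) x = s ∧
      x + (s:ℂ) ≠ x - (s:ℂ) := by
    intro x s hs0
    refine ⟨?_, ?_, ?_⟩
    · rw [Complex.dist_eq, add_sub_cancel_left, Complex.norm_real, Real.norm_eq_abs, abs_of_pos hs0]
    · rw [Complex.dist_eq, sub_sub_cancel_left, norm_neg, Complex.norm_real, Real.norm_eq_abs,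
        abs_of_pos hs0]
    · intro h
      have h2 : (2 : ℂ) * s = 0 := by linear_combination h
      have : (s : ℂ) = 0 := by linear_combination h2 / 2
      exact hs0.ne' (by exact_mod_cast this)
  have htwo : ∀ x ∈ Ω ∪ {p}, ∀ r : ℝ, 0 < r → ∃ a b : ℂ, a ∈ Ω ∧ b ∈ Ω ∧ a ≠ b ∧
      a ∈ Metric.ball x r ∧ b ∈ Metric.ball x r := by
    intro x hx r hr
    rcases hx with hx | hx
    · obtain ⟨r', hr', hball⟩ := Metric.isOpen_iff.1 hopen x hx
      set s := min r r' / 2 with hs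
      have hs0 : 0 < s := by positivity
      have hsr : s < r := by
        have := min_le_left r r'; simp only [hs]; linarith
      have hsr' : s < r' := by
        have := min_le_right r r'; simp only [hs]; linarith
      obtain ⟨d1, d2, hne⟩ := hdist x s hs0
      exact ⟨x + s, x - s, hball (by rw [mem_ball, d1]; exact hsr'),
        hball (by rw [mem_ball, d2]; exact hsr'), hne,
        by rw [mem_ball, d1]; exact hsr, by rw [mem_ball, d2]; exact hsr⟩
    · rw [mem_singleton_iff] at hx; subst hx
      set s := min r δ / 2 with hs
      have hs0 : 0 < s := by positivity
      have hsδ : s < δ := by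
        have := min_le_right r δ; simp only [hs]; linarith
      have hsr : s < r := by
        have := min_le_left r δ; simp only [hs]; linarith
      obtain ⟨d1, d2, hne⟩ := hdist x s hs0
      rw [Complex.dist_eq] at d1 d2
      refine ⟨x + s, x - s, hpball ⟨by rw [d1]; exact hs0, by rw [d1]; exact hsδ⟩,
        hpball ⟨by rw [d2]; exact hs0, by rw [d2]; exact hsδ⟩, hne,
        ?_, ?_⟩ <;> rw [mem_ball, Complex.dist_eq]
      · rw [d1]; exact hsr
      · rw [d2]; exact hsr
  -- f̃ analytic at p, f analytic at q
  have hap : AnalyticAt ℂ ftilde p := hft.analyticAt (hO.mem_nhds hpO)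
  have haq : AnalyticAt ℂ f q := hf.analyticAt (hopen.mem_nhds hq)
  -- non-constancy from injectivity
  have hncp : ¬ (∀ᶠ y in 𝓝 p, ftilde y = ftilde p) := by
    intro h
    rw [Metric.eventually_nhds_iff] at h
    obtain ⟨ε, hε, hconst⟩ := h
    obtain ⟨a, b, ha, hb, hab, haB, hbB⟩ := htwo p hpO ε hε
    apply hab
    apply hinj ha hb
    rw [← hagree a ha, ← hagree b hb,
      hconst (Metric.mem_ball.1 haB), hconst (Metric.mem_ball.1 hbB)]
  have hncq : ¬ (∀ᶠ y in 𝓝 q, f y = f q) := by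
    intro h
    rw [Metric.eventually_nhds_iff] at h
    obtain ⟨ε, hε, hconst⟩ := h
    obtain ⟨a, b, ha, hb, hab, haB, hbB⟩ := htwo q (Or.inl hq) ε hε
    exact hab (hinj ha hb (by rw [hconst (Metric.mem_ball.1 haB),
      hconst (Metric.mem_ball.1 hbB)]))
  have hmp : 𝓝 (ftilde p) ≤ map ftilde (𝓝 p) :=
    hap.eventually_constant_or_nhds_le_map_nhds_aux.resolve_left hncp
  have hmq : 𝓝 (f q) ≤ map f (𝓝 q) :=
    haq.eventually_constant_or_nhds_le_map_nhds_aux.resolve_left hncq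
  -- disjoint neighborhoods
  obtain ⟨U, V, hUo, hVo, hpU, hqV, hUV⟩ := t2_separation hpq
  have hU' : U ∩ (Ω ∪ {p}) ∈ 𝓝 p :=
    Filter.inter_mem (hUo.mem_nhds hpU) (hO.mem_nhds hpO)
  have hV' : V ∩ Ω ∈ 𝓝 q :=
    Filter.inter_mem (hVo.mem_nhds hqV) (hopen.mem_nhds hq)
  have h1 : ftilde '' (U ∩ (Ω ∪ {p})) ∈ 𝓝 (ftilde p) :=
    hmp (image_mem_map hU')
  have h2 : f '' (V ∩ Ω) ∈ 𝓝 (ftilde p) := by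
    rw [← hfq]; exact hmq (image_mem_map hV')
  have h3 : ftilde '' (U ∩ (Ω ∪ {p})) ∩ f '' (V ∩ Ω) ∈ 𝓝[≠] (ftilde p) :=
    nhdsWithin_le_nhds (Filter.inter_mem h1 h2)
  obtain ⟨w, ⟨⟨a, ⟨haU, haO⟩, haw⟩, ⟨b, ⟨hbV, hbΩ⟩, hbw⟩⟩, hwne⟩ :=
    Filter.nonempty_of_mem (Filter.inter_mem h3 self_mem_nhdsWithin)
  rcases haO with haΩ | hap'
  · -- a ∈ Ω : contradiction with injectivity and disjointness
    have : a = b := hinj haΩ hbΩ (by rw [← hagree a haΩ, haw, hbw])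
    subst this
    exact (hUV.le_bot ⟨haU, hbV⟩)
  · rw [mem_singleton_iff] at hap'
    subst hap'
    exact hwne (Set.mem_singleton_iff.2 haw.symm)
end

section
/- Let n > 1 and let Ω = 𝔹ⁿ × 𝔹ⁿ × ⋯ × 𝔹ⁿ ⊂ ℂ^{n²} be the n-fold product of the unit ball 𝔹ⁿ ⊂ ℂⁿ. Then for every z = (z₁, …, zₙ) ∈ Ω with each zᵢ ∈ 𝔹ⁿ, the squeezing function corresponding to the polydisk satisfies T_Ω(z) ≥ 1/√n. -/
open scoped ComplexConjugate

namespace PolydiskAux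

lemma key1 (α W s t tb c cb : ℂ) (ht : t = α * c) (htb : tb = α * cb)
    (hs : s ^ 2 = 1 - α) :
    (1 - cb + s * cb) * (1 - c + s * c) * α - (1 - cb + s * cb) * s * t
      - s * (1 - c + s * c) * tb + s * s * W
    = (1 - t) * (1 - tb) - (1 - α) * (1 - W) := by
  subst ht htb
  linear_combination (W - α * c * cb) * hs

variable {m : ℕ}

local notation "E" => EuclideanSpace ℂ (Fin m)

noncomputable def mobS (a : E) : ℂ := (Real.sqrt (1 - ‖a‖ ^ 2) : ℝ)

noncomputable def mobC (a w : E) : ℂ := (inner ℂ a w) / ((‖a‖ : ℂ) ^ 2)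

noncomputable def mobBeta (a w : E) : ℂ := 1 - mobC a w + mobS a * mobC a w

noncomputable def mob (a w : E) : E :=
  (1 - (inner ℂ a w))⁻¹ • (mobBeta a w • a - mobS a • w)

lemma inner_eq_mul_mobC (a w : E) : (inner ℂ a w) = ((‖a‖ : ℂ) ^ 2) * mobC a w := by
  rcases eq_or_ne a 0 with rfl | ha
  · simp [mobC]
  · rw [mobC, mul_div_cancel₀]
    simpa using ha

lemma mobS_sq (a : E) (ha : ‖a‖ ≤ 1) : mobS a ^ 2 = 1 - (‖a‖ : ℂ) ^ 2 := by
  rw [mobS, ← Complex.ofReal_pow, Real.sq_sqrt (by nlinarith [norm_nonneg a])]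
  push_cast
  ring

lemma conj_mobS (a : E) : conj (mobS a) = mobS a := Complex.conj_ofReal _

lemma conj_mobBeta (a w : E) :
    conj (mobBeta a w) = 1 - conj (mobC a w) + mobS a * conj (mobC a w) := by
  simp [mobBeta, map_sub, map_add, map_mul, conj_mobS]

lemma inner_conj_mobC (a w : E) :
    (inner ℂ w a) = ((‖a‖ : ℂ) ^ 2) * conj (mobC a w) := by
  rw [← inner_conj_symm w a, inner_eq_mul_mobC, map_mul, map_pow, Complex.conj_ofReal]

lemma norm_inner_lt_one (a w : E) (ha : ‖a‖ < 1) (hw : ‖w‖ < 1) :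
    ‖(inner ℂ a w)‖ < 1 := by
  calc ‖(inner ℂ a w)‖ ≤ ‖a‖ * ‖w‖ := norm_inner_le_norm a w
    _ < 1 := by nlinarith [norm_nonneg a, norm_nonneg w]

lemma denom_ne_zero (a w : E) (ha : ‖a‖ < 1) (hw : ‖w‖ < 1) :
    (1 : ℂ) - (inner ℂ a w) ≠ 0 := by
  intro h
  have h1 : (inner ℂ a w) = 1 := by linear_combination -h
  have := norm_inner_lt_one a w ha hw
  rw [h1] at this
  simp at this

/-- The key inner-product identity. -/
lemma inner_num_eq (a w : E) (ha : ‖a‖ < 1) (hw : ‖w‖ < 1) :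
    (inner ℂ (mobBeta a w • a - mobS a • w) (mobBeta a w • a - mobS a • w)) =
    (1 - (inner ℂ a w)) * (1 - (inner ℂ w a))
      - (1 - (‖a‖ : ℂ) ^ 2) * (1 - (‖w‖ : ℂ) ^ 2) := by
  have expand : (inner ℂ (mobBeta a w • a - mobS a • w) (mobBeta a w • a - mobS a • w)) =
      conj (mobBeta a w) * mobBeta a w * ((‖a‖ : ℂ) ^ 2)
        - conj (mobBeta a w) * mobS a * (inner ℂ a w)
        - mobS a * mobBeta a w * (inner ℂ w a)
        + mobS a * mobS a * ((‖w‖ : ℂ) ^ 2) := by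
    rw [inner_sub_left, inner_sub_right, inner_sub_right, inner_smul_left, inner_smul_right,
      inner_smul_left, inner_smul_right, inner_smul_left, inner_smul_right, inner_smul_left,
      inner_smul_right, inner_self_eq_norm_sq_to_K, inner_self_eq_norm_sq_to_K, conj_mobS]
    norm_num
    ring
  rw [expand, conj_mobBeta, mobBeta]
  exact key1 _ _ _ _ _ _ _ (inner_eq_mul_mobC a w) (inner_conj_mobC a w)
    (mobS_sq a ha.le)


namespace Inv

lemma key2 (α s t c t' c' : ℂ) (hc : t = α * c) (hc' : t' = α * c')
    (hs : s ^ 2 = 1 - α)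
    (hE : t' * (1 - t) = (1 - c + s * c) * α - s * t) :
    (1 - t') * (1 - t) = s ^ 2 := by
  linear_combination -hE + (s - 1) * hc - hs

lemma key3 (α s t c t' c' : ℂ) (hc : t = α * c) (hc' : t' = α * c')
    (hs : s ^ 2 = 1 - α)
    (hE : t' * (1 - t) = (1 - c + s * c) * α - s * t) :
    α * ((1 - c' + s * c') * (1 - t)) = α * (s * (1 - c + s * c)) := by
  linear_combination (s - 1) * hE - ((s - 1) * (1 - t)) * hc' + (s - 1) * hc - t * hs

end Inv

lemma inner_mob (a w : E) :
    (inner ℂ a (mob a w))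
      = (1 - (inner ℂ a w))⁻¹ * (mobBeta a w * ((‖a‖ : ℂ) ^ 2) - mobS a * (inner ℂ a w)) := by
  rw [mob, inner_smul_right, inner_sub_right, inner_smul_right, inner_smul_right,
    inner_self_eq_norm_sq_to_K]
  norm_num

lemma mobS_ne_zero (a : E) (ha : ‖a‖ < 1) : mobS a ≠ 0 := by
  have h : (0:ℝ) < 1 - ‖a‖ ^ 2 := by nlinarith [norm_nonneg a]
  simp only [mobS, ne_eq, Complex.ofReal_eq_zero]
  positivity

lemma mob_zero_right : mob (0 : E) w = -w := by
  simp [mob, mobBeta, mobC, mobS]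

lemma combo (d d' b b' s : ℂ) (a w : E) :
    d'⁻¹ • (b' • a - s • (d⁻¹ • (b • a - s • w)))
      = (d'⁻¹ * b' - d'⁻¹ * (s * (d⁻¹ * b))) • a + (d'⁻¹ * (s * (d⁻¹ * s))) • w := by
  module

lemma mob_mob (a w : E) (ha : ‖a‖ < 1) (hw : ‖w‖ < 1) : mob a (mob a w) = w := by
  rcases eq_or_ne a 0 with rfl | ha0
  · rw [mob_zero_right, mob_zero_right, neg_neg]
  · have hα : ((‖a‖ : ℂ) ^ 2) ≠ 0 := by simpa using ha0
    set t := (inner ℂ a w) with hts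
    have hdt : (1 : ℂ) - t ≠ 0 := denom_ne_zero a w ha hw
    set u := mob a w with hu
    have hu2 : u = (1 - t)⁻¹ • (mobBeta a w • a - mobS a • w) := by
      rw [hu, mob, ← hts]
    set t' := (inner ℂ a u) with ht's
    have hs2 : mobS a ^ 2 = 1 - (‖a‖ : ℂ) ^ 2 := mobS_sq a ha.le
    have hc : t = ((‖a‖ : ℂ) ^ 2) * mobC a w := by
      have h := inner_eq_mul_mobC a w; rw [← hts] at h; exact h
    have hc' : t' = ((‖a‖ : ℂ) ^ 2) * mobC a u := by
      have h := inner_eq_mul_mobC a u; rw [← ht's] at h; exact h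
    have hE : t' * (1 - t) = mobBeta a w * ((‖a‖ : ℂ) ^ 2) - mobS a * t := by
      have h0 := inner_mob a w
      rw [← hts, ← hu, ← ht's] at h0
      rw [h0, mul_comm ((1 - t)⁻¹) _, mul_assoc, inv_mul_cancel₀ hdt, mul_one]
    have hA : (1 - t') * (1 - t) = mobS a ^ 2 :=
      Inv.key2 _ _ _ _ _ _ hc hc' hs2 (by rw [hE, mobBeta])
    have hs0 : mobS a ≠ 0 := mobS_ne_zero a ha
    have hdt' : (1 : ℂ) - t' ≠ 0 := by
      intro h
      rw [h, zero_mul] at hA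
      exact hs0 (by simpa using hA.symm)
    have hB : mobBeta a u * (1 - t) = mobS a * mobBeta a w := by
      have h3 := Inv.key3 _ _ _ _ _ _ hc hc' hs2 (by rw [hE, mobBeta])
      have h4 := mul_left_cancel₀ hα h3
      simpa [mobBeta] using h4
    rw [mob, ← ht's]
    set b' := mobBeta a u with hb'
    rw [hu2, combo]
    have hP : (1 - t')⁻¹ * b' - (1 - t')⁻¹ * (mobS a * ((1 - t)⁻¹ * mobBeta a w)) = 0 := by
      field_simp
      linear_combination hB
    have hQ : (1 - t')⁻¹ * (mobS a * ((1 - t)⁻¹ * mobS a)) = 1 := by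
      field_simp
      linear_combination -hA
    rw [hP, hQ, zero_smul, one_smul, zero_add]

lemma mob_self (a : E) : mob a a = 0 := by
  rcases eq_or_ne a 0 with rfl | ha0
  · simp [mob]
  · have hα : ((‖a‖ : ℂ) ^ 2) ≠ 0 := by simpa using ha0
    have hc : mobC a a = 1 := by
      rw [mobC, inner_self_eq_norm_sq_to_K]
      exact div_self hα
    rw [mob, mobBeta, hc]
    simp

lemma norm_num_lt (a w : E) (ha : ‖a‖ < 1) (hw : ‖w‖ < 1) :
    ‖mobBeta a w • a - mobS a • w‖ < ‖1 - (inner ℂ a w)‖ := by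
  have h2 := inner_num_eq a w ha hw
  rw [← inner_conj_symm w a] at h2
  have h3 : ((1 : ℂ) - (inner ℂ a w)) * (1 - conj (inner ℂ a w))
      = ((‖(1 : ℂ) - (inner ℂ a w)‖ ^ 2 : ℝ) : ℂ) := by
    rw [show ((1 : ℂ) - (inner ℂ a w)) * (1 - conj (inner ℂ a w))
        = (1 - (inner ℂ a w)) * conj (1 - (inner ℂ a w)) by rw [map_sub, map_one]]
    rw [Complex.mul_conj, Complex.normSq_eq_norm_sq]
  have h4 : ((1 : ℂ) - (‖a‖ : ℂ) ^ 2) * (1 - (‖w‖ : ℂ) ^ 2)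
      = (((1 - ‖a‖ ^ 2) * (1 - ‖w‖ ^ 2) : ℝ) : ℂ) := by push_cast; ring
  rw [h3, h4, ← Complex.ofReal_sub] at h2
  have h5 : ‖mobBeta a w • a - mobS a • w‖ ^ 2
      = ‖(1 : ℂ) - (inner ℂ a w)‖ ^ 2 - (1 - ‖a‖ ^ 2) * (1 - ‖w‖ ^ 2) := by
    have h6 := inner_self_eq_norm_sq (𝕜 := ℂ) (mobBeta a w • a - mobS a • w)
    rw [h2] at h6
    simp only [RCLike.re_to_complex, Complex.ofReal_re] at h6
    exact h6.symm
  have hpos : 0 < (1 - ‖a‖ ^ 2) * (1 - ‖w‖ ^ 2) := by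
    have h8 := norm_nonneg a; have h9 := norm_nonneg w
    have e1 : (0:ℝ) < 1 - ‖a‖ ^ 2 := by nlinarith
    have e2 : (0:ℝ) < 1 - ‖w‖ ^ 2 := by nlinarith
    exact mul_pos e1 e2
  have h7 : ‖mobBeta a w • a - mobS a • w‖ ^ 2 < ‖(1 : ℂ) - (inner ℂ a w)‖ ^ 2 := by
    rw [h5]; linarith
  exact lt_of_pow_lt_pow_left₀ 2 (norm_nonneg _) h7

lemma norm_mob_lt_one (a w : E) (ha : ‖a‖ < 1) (hw : ‖w‖ < 1) : ‖mob a w‖ < 1 := by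
  have hd := denom_ne_zero a w ha hw
  rw [mob, norm_smul, norm_inv]
  rw [inv_mul_lt_iff₀ (norm_pos_iff.mpr hd), mul_one]
  exact norm_num_lt a w ha hw

lemma diffOn_mob_comp {G : Type*} [NormedAddCommGroup G] [NormedSpace ℂ G]
    (a : E) (ha : ‖a‖ < 1) (g : G →L[ℂ] E) (S : Set G) (hS : ∀ x ∈ S, ‖g x‖ < 1) :
    DifferentiableOn ℂ (fun x => mob a (g x)) S := by
  have hinner : DifferentiableOn ℂ (fun x => (inner ℂ a (g x))) S :=
    (((innerSL ℂ a).comp g).differentiable).differentiableOn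
  have hden : DifferentiableOn ℂ (fun x => (1 - (inner ℂ a (g x)))⁻¹) S := by
    apply DifferentiableOn.inv
    · exact (differentiableOn_const _).sub hinner
    · intro x hx; exact denom_ne_zero a (g x) ha (hS x hx)
  have hbeta : DifferentiableOn ℂ (fun x => mobBeta a (g x)) S := by
    have hc : DifferentiableOn ℂ (fun x => (inner ℂ a (g x)) / ((‖a‖ : ℂ) ^ 2)) S :=
      by simpa only [div_eq_mul_inv] using hinner.mul_const (((‖a‖ : ℂ) ^ 2)⁻¹)
    simp only [mobBeta, mobC]
    exact ((differentiableOn_const (1 : ℂ)).sub hc).add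
      ((differentiableOn_const (mobS a)).mul hc)
  have hnum : DifferentiableOn ℂ (fun x => mobBeta a (g x) • a - mobS a • g x) S :=
    (hbeta.smul (differentiableOn_const a)).sub
      ((differentiableOn_const (mobS a)).smul g.differentiable.differentiableOn)
  simp only [mob]
  exact hden.smul hnum

lemma abs_coord_le {k : ℕ} (x : EuclideanSpace ℂ (Fin k)) (j : Fin k) :
    ‖x j‖ ≤ ‖x‖ := by
  rw [EuclideanSpace.norm_eq]
  have h1 : ‖x j‖ ^ 2 ≤ ∑ i, ‖x i‖ ^ 2 := by
    have := Finset.single_le_sum (f := fun i => ‖x i‖ ^ 2)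
      (fun i _ => by positivity) (Finset.mem_univ j)
    simpa using this
  calc ‖x j‖ = Real.sqrt (‖x j‖ ^ 2) :=
        (Real.sqrt_sq (norm_nonneg _)).symm
    _ ≤ _ := Real.sqrt_le_sqrt h1

noncomputable def rowCLM (n : ℕ) (i : Fin n) :
    EuclideanSpace ℂ (Fin n × Fin n) →L[ℂ] EuclideanSpace ℂ (Fin n) :=
  LinearMap.toContinuousLinearMap
    { toFun := fun x => WithLp.toLp 2 (fun j => x (i, j)),
      map_add' := fun _ _ => rfl,
      map_smul' := fun _ _ => rfl }

lemma rowCLM_apply {n : ℕ} (i : Fin n) (x : EuclideanSpace ℂ (Fin n × Fin n)) (j : Fin n) :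
    rowCLM n i x j = x (i, j) := rfl

end PolydiskAux

/-- The squeezing function corresponding to the polydisk for a domain
`Ω ⊆ ℂ^(n²)` (coordinates indexed by `Fin n × Fin n`, with the Euclidean norm). -/
noncomputable def polydiskSqueezingFunction (n : ℕ)
    (Ω : Set (EuclideanSpace ℂ (Fin n × Fin n)))
    (z : EuclideanSpace ℂ (Fin n × Fin n)) : ℝ :=
  sSup {r : ℝ | 0 < r ∧
    ∃ f : EuclideanSpace ℂ (Fin n × Fin n) → EuclideanSpace ℂ (Fin n × Fin n),
    DifferentiableOn ℂ f Ω ∧ Set.InjOn f Ω ∧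
    (∀ w ∈ Ω, ∀ i, ‖f w i‖ < 1) ∧
    f z = 0 ∧
    {w : EuclideanSpace ℂ (Fin n × Fin n) | ∀ i, ‖w i‖ < r} ⊆ f '' Ω}

/-- For the `n`-fold product `Ω = 𝔹ⁿ × ⋯ × 𝔹ⁿ ⊂ ℂ^(n²)` of Euclidean unit balls
(the `i`-th row `(z (i, j))_j` lies in `𝔹ⁿ`), the squeezing function corresponding to
the polydisk satisfies `T_Ω(z) ≥ 1/√n`. -/
theorem polydiskSqueezing_product_of_balls_ge
    (n : ℕ) (hn : 1 < n)
    (Ω : Set (EuclideanSpace ℂ (Fin n × Fin n)))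
    (hΩ : Ω = {z : EuclideanSpace ℂ (Fin n × Fin n) |
      ∀ i : Fin n, ∑ j : Fin n, ‖z (i, j)‖ ^ 2 < 1})
    (z : EuclideanSpace ℂ (Fin n × Fin n)) (hz : z ∈ Ω) :
    1 / Real.sqrt n ≤ polydiskSqueezingFunction n Ω z := by
  classical
  open PolydiskAux in
  have hn0 : (0 : ℝ) < (n : ℝ) := by exact_mod_cast Nat.pos_of_ne_zero (by omega)
  have hr₀ : 0 < 1 / Real.sqrt n := div_pos one_pos (Real.sqrt_pos.mpr hn0)
  -- membership in Ω via row norms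
  have hmem : ∀ w : EuclideanSpace ℂ (Fin n × Fin n),
      w ∈ Ω ↔ ∀ i : Fin n, ‖PolydiskAux.rowCLM n i w‖ < 1 := by
    intro w
    rw [hΩ]
    simp only [Set.mem_setOf_eq]
    refine forall_congr' fun i => ?_
    have hs : ‖PolydiskAux.rowCLM n i w‖ ^ 2 = ∑ j, ‖w (i, j)‖ ^ 2 := by
      rw [EuclideanSpace.norm_eq, Real.sq_sqrt (by positivity)]
      exact Finset.sum_congr rfl fun j _ => by
        rw [PolydiskAux.rowCLM_apply]
    rw [← hs, pow_lt_one_iff_of_nonneg (norm_nonneg _) two_ne_zero]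
  have hzrow : ∀ i, ‖PolydiskAux.rowCLM n i z‖ < 1 := (hmem z).1 hz
  -- the embedding
  set f : EuclideanSpace ℂ (Fin n × Fin n) → EuclideanSpace ℂ (Fin n × Fin n) :=
    fun w => WithLp.toLp 2 (fun p : Fin n × Fin n => PolydiskAux.mob (PolydiskAux.rowCLM n p.1 z)
      (PolydiskAux.rowCLM n p.1 w) p.2) with hf
  have hrowf : ∀ (w : EuclideanSpace ℂ (Fin n × Fin n)) (i : Fin n),
      PolydiskAux.rowCLM n i (f w)
        = PolydiskAux.mob (PolydiskAux.rowCLM n i z) (PolydiskAux.rowCLM n i w) :=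
    fun w i => rfl
  have hfmem : ∀ w ∈ Ω, f w ∈ Ω := by
    intro w hw
    refine (hmem (f w)).2 fun i => ?_
    rw [hrowf]
    exact PolydiskAux.norm_mob_lt_one _ _ (hzrow i) ((hmem w).1 hw i)
  have hff : ∀ w ∈ Ω, f (f w) = w := by
    intro w hw
    ext p
    calc f (f w) p
        = PolydiskAux.mob (PolydiskAux.rowCLM n p.1 z)
            (PolydiskAux.rowCLM n p.1 (f w)) p.2 := rfl
      _ = PolydiskAux.mob (PolydiskAux.rowCLM n p.1 z)
            (PolydiskAux.mob (PolydiskAux.rowCLM n p.1 z) (PolydiskAux.rowCLM n p.1 w)) p.2 := by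
            rw [hrowf]
      _ = PolydiskAux.rowCLM n p.1 w p.2 := by
            rw [PolydiskAux.mob_mob _ _ (hzrow p.1) ((hmem w).1 hw p.1)]
      _ = w p := rfl
  have hdiff : DifferentiableOn ℂ f Ω := by
    have hcoord : ∀ p : Fin n × Fin n, DifferentiableOn ℂ (fun w => f w p) Ω := by
      intro p
      have h1 : DifferentiableOn ℂ
          (fun w : EuclideanSpace ℂ (Fin n × Fin n) =>
            PolydiskAux.mob (PolydiskAux.rowCLM n p.1 z) (PolydiskAux.rowCLM n p.1 w)) Ω :=
        PolydiskAux.diffOn_mob_comp _ (hzrow p.1) (PolydiskAux.rowCLM n p.1) Ω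
          (fun w hw => (hmem w).1 hw p.1)
      exact (EuclideanSpace.proj p.2 :
        EuclideanSpace ℂ (Fin n) →L[ℂ] ℂ).differentiable.comp_differentiableOn h1
    exact (PiLp.continuousLinearEquiv 2 ℂ
      (fun _ : Fin n × Fin n => ℂ)).comp_differentiableOn_iff.mp
      (differentiableOn_pi.2 hcoord)
  have hinj : Set.InjOn f Ω := fun w1 h1 w2 h2 heq => by
    rw [← hff w1 h1, ← hff w2 h2, heq]
  have hbound : ∀ w ∈ Ω, ∀ p : Fin n × Fin n, ‖f w p‖ < 1 := by
    intro w hw p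
    calc ‖f w p‖ ≤ ‖PolydiskAux.rowCLM n p.1 (f w)‖ :=
        PolydiskAux.abs_coord_le (PolydiskAux.rowCLM n p.1 (f w)) p.2
      _ < 1 := by
        rw [hrowf]
        exact PolydiskAux.norm_mob_lt_one _ _ (hzrow p.1) ((hmem w).1 hw p.1)
  have hfz : f z = 0 := by
    ext p
    have h2 : PolydiskAux.rowCLM n p.1 (f z) = 0 := by
      rw [hrowf]; exact PolydiskAux.mob_self _
    have h3 : f z p = PolydiskAux.rowCLM n p.1 (f z) p.2 := rfl
    rw [h3, h2]; rfl
  have hpoly : {w : EuclideanSpace ℂ (Fin n × Fin n) |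
      ∀ p, ‖w p‖ < 1 / Real.sqrt n} ⊆ f '' Ω := by
    intro w hw
    have hwΩ : w ∈ Ω := by
      rw [hΩ]
      intro i
      have hterm : ∀ j : Fin n, ‖w (i, j)‖ ^ 2 < 1 / (n : ℝ) := by
        intro j
        have h1 : ‖w (i, j)‖ ^ 2 < (1 / Real.sqrt n) ^ 2 :=
          pow_lt_pow_left₀ (hw (i, j)) (norm_nonneg _) two_ne_zero
        rwa [div_pow, one_pow, Real.sq_sqrt hn0.le] at h1
      calc ∑ j, ‖w (i, j)‖ ^ 2
          < ∑ _j : Fin n, 1 / (n : ℝ) :=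
            Finset.sum_lt_sum_of_nonempty ⟨⟨0, by omega⟩, Finset.mem_univ _⟩
              (fun j _ => hterm j)
        _ = 1 := by
            rw [Finset.sum_const, Finset.card_univ, Fintype.card_fin, nsmul_eq_mul]
            field_simp
    exact ⟨f w, hfmem w hwΩ, hff w hwΩ⟩
  have hmemS : (1 / Real.sqrt n) ∈ {r : ℝ | 0 < r ∧
      ∃ f : EuclideanSpace ℂ (Fin n × Fin n) → EuclideanSpace ℂ (Fin n × Fin n),
      DifferentiableOn ℂ f Ω ∧ Set.InjOn f Ω ∧
      (∀ w ∈ Ω, ∀ i, ‖f w i‖ < 1) ∧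
      f z = 0 ∧
      {w : EuclideanSpace ℂ (Fin n × Fin n) | ∀ i, ‖w i‖ < 1 / Real.sqrt n}
        ⊆ f '' Ω} :=
    ⟨hr₀, f, hdiff, hinj, hbound, hfz, hpoly⟩
  have hbddS : BddAbove {r : ℝ | 0 < r ∧
      ∃ f : EuclideanSpace ℂ (Fin n × Fin n) → EuclideanSpace ℂ (Fin n × Fin n),
      DifferentiableOn ℂ f Ω ∧ Set.InjOn f Ω ∧
      (∀ w ∈ Ω, ∀ i, ‖f w i‖ < 1) ∧
      f z = 0 ∧
      {w : EuclideanSpace ℂ (Fin n × Fin n) | ∀ i, ‖w i‖ < r} ⊆ f '' Ω} := by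
    refine ⟨1, fun r hr => ?_⟩
    obtain ⟨hrpos, g, -, -, hgb, -, hsur⟩ := hr
    by_contra hr1
    push_neg at hr1
    have hwmem : (WithLp.toLp 2 (fun _ => (1 : ℂ)) : EuclideanSpace ℂ (Fin n × Fin n)) ∈
        {w : EuclideanSpace ℂ (Fin n × Fin n) | ∀ p, ‖w p‖ < r} :=
      fun p => by simpa using hr1
    obtain ⟨ω, hω, hgω⟩ := hsur hwmem
    have h2 := hgb ω hω ⟨⟨0, by omega⟩, ⟨0, by omega⟩⟩
    rw [hgω] at h2
    simp at h2
  exact le_csSup hbddS hmemS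
end
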